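/- arXiv:0906.4927 — 6 statements merged into one kernel-verified Lean document; each statement's English description precedes it below -/
import Mathlib

section
/- For every 0 ≤ i ≤ n and every j ≥ 0, the probability that a randomly generated possible world of the reduced relation X_i has exactly j tuples equals the Poisson-binomial probability of the projected x-tuple existence probabilities: Σ_{S ⊆ {1,…,i}, g injective on S, |S| = j} Pr_i(S) = PB_j(ρ_i(1),…,ρ_i(m)). -/
open Finset
open scoped Classical

/-- Poisson-binomial probability of exactly `j` successes among independent
events indexed by `A`, with success probabilities `q`. -/
noncomputable def PB {α : Type*} [DecidableEq α] (A : Finset α) (q : α → ℝ) (j : ℕ) : ℝ :=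
  ∑ T ∈ A.powersetCard j, (∏ a ∈ T, q a) * ∏ a ∈ A \ T, (1 - q a)

/-- Probability of a possible world `S` of the full x-Relation. -/
noncomputable def worldProb {n m : ℕ} (g : Fin n → Fin m) (p : Fin n → ℝ)
    (S : Finset (Fin n)) : ℝ :=
  (∏ t ∈ S, p t) *
    ∏ a ∈ Finset.univ.filter (fun a : Fin m => ∀ t ∈ S, g t ≠ a),
      (1 - ∑ t ∈ Finset.univ.filter (fun t : Fin n => g t = a), p t)

/-- `rho g p i a` = existence probability of x-tuple `a` projected to the reduced
relation on the top `i` tuples (`i` is a 1-based count, tuples are 0-based). -/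
noncomputable def rho {n m : ℕ} (g : Fin n → Fin m) (p : Fin n → ℝ) (i : ℕ) (a : Fin m) : ℝ :=
  ∑ t ∈ Finset.univ.filter (fun t : Fin n => (t : ℕ) < i ∧ g t = a), p t

/-- Probability of a possible world `S` of the reduced relation on the top `i` tuples. -/
noncomputable def worldProbI {n m : ℕ} (g : Fin n → Fin m) (p : Fin n → ℝ) (i : ℕ)
    (S : Finset (Fin n)) : ℝ :=
  (∏ t ∈ S, p t) *
    ∏ a ∈ Finset.univ.filter (fun a : Fin m => ∀ t ∈ S, g t ≠ a), (1 - rho g p i a)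

/-- `pij g p i j` = probability that tuple `i` is ranked at the `j`-th position
(`j ≥ 1`) across all possible worlds: the sum of `worldProb` over possible worlds
containing `i` together with exactly `j - 1` higher-score tuples. -/
noncomputable def pij {n m : ℕ} (g : Fin n → Fin m) (p : Fin n → ℝ) (i : Fin n) (j : ℕ) : ℝ :=
  ∑ S ∈ Finset.univ.filter (fun S : Finset (Fin n) =>
      Set.InjOn g ↑S ∧ i ∈ S ∧ (S.filter (fun t => (t : ℕ) < (i : ℕ))).card = j - 1),
    worldProb g p S

/-- `tkp g p k i` = top-`k` probability of tuple `i`. -/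
noncomputable def tkp {n m : ℕ} (g : Fin n → Fin m) (p : Fin n → ℝ) (k : ℕ) (i : Fin n) : ℝ :=
  ∑ j ∈ Finset.Icc 1 k, pij g p i j

/-!
Expanding `∏ a ∈ T, ρ_i(a) = ∏ a ∈ T, ∑_{t < i, g t = a} p t` distributes into a sum over the
sets `S` of tuples that pick exactly one tuple from each x-tuple of `T`, i.e. over the possible
worlds of `X_i` whose set of x-tuples is `T`; each such world contributes `∏ t ∈ S, p t`, and the
factor `∏ a ∉ T, (1 - ρ_i(a))` is shared by all of them. Grouping the worlds of `X_i` by their set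
of x-tuples, which has the same size as the world since `g` is injective on it, turns the left
side into the Poisson-binomial sum term by term.
-/

namespace Finset

variable {α β : Type*} [DecidableEq β]

theorem image_erase_of_injOn [DecidableEq α] {f : α → β} {s : Finset α} (hf : Set.InjOn f s)
    {a : α} (ha : a ∈ s) : (s.erase a).image f = (s.image f).erase (f a) := by
  ext b
  simp only [mem_image, mem_erase]
  constructor
  · rintro ⟨x, ⟨hxa, hx⟩, rfl⟩
    exact ⟨fun h => hxa (hf hx ha h), x, hx, rfl⟩
  · rintro ⟨hb, x, hx, rfl⟩
    exact ⟨x, ⟨by rintro rfl; exact hb rfl, hx⟩, rfl⟩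

def transversals (s : Finset α) (g : α → β) (T : Finset β) : Finset (Finset α) :=
  s.powerset.filter fun S : Finset α => Set.InjOn g ↑S ∧ S.image g = T

theorem mem_transversals {s : Finset α} {g : α → β} {T : Finset β} {S : Finset α} :
    S ∈ transversals s g T ↔ S ⊆ s ∧ Set.InjOn g ↑S ∧ S.image g = T := by
  rw [transversals, mem_filter, mem_powerset]

theorem transversals_empty (s : Finset α) (g : α → β) : transversals s g ∅ = {∅} := by
  ext S
  simp only [mem_transversals, image_eq_empty, mem_singleton]
  exact ⟨fun h => h.2.2, by rintro rfl; simp⟩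

theorem transversals_insert [DecidableEq α] {s : Finset α} {g : α → β} {T : Finset β} {c : β}
    (hc : c ∉ T) :
    transversals s g (insert c T) =
      ((s.filter (g · = c)) ×ˢ transversals s g T).image fun x => insert x.1 x.2 := by
  ext S'
  simp only [mem_image, mem_product, mem_filter, mem_transversals, Prod.exists]
  constructor
  · rintro ⟨hS's, hinj, hS'⟩
    obtain ⟨a, haS', ha⟩ := mem_image.1 (hS' ▸ mem_insert_self c T)
    refine ⟨a, S'.erase a, ⟨⟨hS's haS', ha⟩, (erase_subset a S').trans hS's,
      hinj.mono (by simp), ?_⟩, insert_erase haS'⟩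
    rw [image_erase_of_injOn hinj haS', hS', ha, erase_insert hc]
  · rintro ⟨a, S, ⟨⟨has, rfl⟩, hSs, hinj, rfl⟩, rfl⟩
    have haS : a ∉ S := fun h => hc (mem_image_of_mem g h)
    refine ⟨insert_subset has hSs, ?_, image_insert g a S⟩
    rw [coe_insert, Set.injOn_insert haS]
    exact ⟨hinj, by simpa using hc⟩

theorem prod_sum_fiber_eq_sum_transversals [DecidableEq α] {R : Type*} [CommSemiring R]
    (s : Finset α) (g : α → β) (f : α → R) (T : Finset β) :
    ∏ b ∈ T, ∑ a ∈ s with g a = b, f a = ∑ S ∈ transversals s g T, ∏ a ∈ S, f a := by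
  induction T using Finset.induction_on with
  | empty => rw [transversals_empty, sum_singleton, prod_empty, prod_empty]
  | insert c T hc ih =>
    have not_mem {a : α} {S : Finset α} (ha : g a = c) (hS : S ∈ transversals s g T) : a ∉ S :=
      fun h => hc ((mem_transversals.1 hS).2.2 ▸ ha ▸ mem_image_of_mem g h)
    rw [prod_insert hc, ih, sum_mul_sum, ← sum_product', transversals_insert hc, sum_image]
    · refine sum_congr rfl fun x hx => ?_
      obtain ⟨hx₁, hx₂⟩ := mem_product.1 hx
      rw [prod_insert (not_mem (mem_filter.1 hx₁).2 hx₂)]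
    · rintro ⟨a, S⟩ hx ⟨a', S'⟩ hx' (h : insert a S = insert a' S')
      rw [mem_coe, mem_product, mem_filter] at hx hx'
      obtain ⟨⟨-, ha⟩, hS⟩ := hx
      obtain ⟨⟨-, -⟩, hS'⟩ := hx'
      dsimp only at ha hS hS'
      obtain rfl : a = a' :=
        (mem_insert.1 (h ▸ mem_insert_self a S)).resolve_right (not_mem ha hS')
      rw [← erase_insert (not_mem ha hS), h, erase_insert (not_mem ha hS')]

end Finset

theorem worldProbI_eq_prod_mul_prod {n m : ℕ} (g : Fin n → Fin m) (p : Fin n → ℝ) (i : ℕ)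
    (S : Finset (Fin n)) :
    worldProbI g p i S = (∏ t ∈ S, p t) * ∏ a ∈ univ \ S.image g, (1 - rho g p i a) := by
  rw [worldProbI]
  congr 2
  ext a
  simp

theorem sum_worldProbI_transversals {n m : ℕ} (g : Fin n → Fin m) (p : Fin n → ℝ) (i : ℕ)
    (T : Finset (Fin m)) :
    ∑ S ∈ transversals (univ.filter fun t : Fin n => (t : ℕ) < i) g T, worldProbI g p i S =
      (∏ a ∈ T, rho g p i a) * ∏ a ∈ univ \ T, (1 - rho g p i a) := by
  calc _ = ∑ S ∈ transversals (univ.filter fun t : Fin n => (t : ℕ) < i) g T,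
        (∏ t ∈ S, p t) * ∏ a ∈ univ \ T, (1 - rho g p i a) :=
        sum_congr rfl fun S hS => by rw [worldProbI_eq_prod_mul_prod, (mem_transversals.1 hS).2.2]
    _ = _ := by
        rw [← sum_mul, ← prod_sum_fiber_eq_sum_transversals]
        simp only [rho, filter_filter]

theorem count_dist_eq_poisson_binomial_general (n m : ℕ) (g : Fin n → Fin m) (p : Fin n → ℝ)
    (i : ℕ) (j : ℕ) :
    ∑ S ∈ Finset.univ.filter (fun S : Finset (Fin n) =>
        (∀ t ∈ S, (t : ℕ) < i) ∧ Set.InjOn g ↑S ∧ S.card = j),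
      worldProbI g p i S
      = PB Finset.univ (rho g p i) j := by
  set worlds := Finset.univ.filter (fun S : Finset (Fin n) =>
    (∀ t ∈ S, (t : ℕ) < i) ∧ Set.InjOn g ↑S ∧ S.card = j)
  have image_mem : ∀ S ∈ worlds, S.image g ∈ univ.powersetCard j := fun S hS => by
    obtain ⟨-, hinj, hcard⟩ := (mem_filter.1 hS).2
    exact mem_powersetCard.2 ⟨subset_univ _, (card_image_of_injOn hinj).trans hcard⟩
  have worlds_over : ∀ T ∈ univ.powersetCard j, worlds.filter (·.image g = T) =
      transversals (univ.filter fun t : Fin n => (t : ℕ) < i) g T := by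
    intro T hT
    ext S
    simp only [worlds, mem_filter, mem_transversals, mem_univ, true_and, subset_iff]
    constructor
    · rintro ⟨⟨hlt, hinj, -⟩, hS⟩
      exact ⟨hlt, hinj, hS⟩
    · rintro ⟨hlt, hinj, rfl⟩
      exact ⟨⟨hlt, hinj, (card_image_of_injOn hinj).symm.trans (mem_powersetCard.1 hT).2⟩, rfl⟩
  rw [← sum_fiberwise_of_maps_to image_mem, PB]
  refine sum_congr rfl fun T hT => ?_
  rw [worlds_over T hT, sum_worldProbI_transversals]

/-- The probability that a randomly generated possible world of the reduced relation
`X_i` has exactly `j` tuples equals the Poisson-binomial probability of the projected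
x-tuple existence probabilities. -/
theorem count_dist_eq_poisson_binomial (n m : ℕ) (g : Fin n → Fin m) (p : Fin n → ℝ)
    (hp : ∀ t, 0 ≤ p t)
    (hsum : ∀ a : Fin m, ∑ t ∈ Finset.univ.filter (fun t : Fin n => g t = a), p t ≤ 1)
    (i : ℕ) (hi : i ≤ n) (j : ℕ) :
    ∑ S ∈ Finset.univ.filter (fun S : Finset (Fin n) =>
        (∀ t ∈ S, (t : ℕ) < i) ∧ Set.InjOn g ↑S ∧ S.card = j),
      worldProbI g p i S
      = PB Finset.univ (rho g p i) j :=
  count_dist_eq_poisson_binomial_general n m g p i j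
end

section
/- The rank probability p_{i,j} is the same whether computed over the full x-Relation or over the reduced relation X_i on the top-i tuples: for all 1 ≤ i ≤ n and j ≥ 1, Σ_{S ⊆ {1,…,n}, g injective on S, i ∈ S, |S ∩ {1,…,i−1}| = j−1} Pr(S) = Σ_{S ⊆ {1,…,i}, g injective on S, i ∈ S, |S ∩ {1,…,i−1}| = j−1} Pr_i(S). -/
/-!
Split a world `S` of the full relation as `S₀ ∪ S₁`, where `S₀` is its part among the top `i + 1`
tuples. The rank condition on `S` only depends on `S₀`, and summing `worldProb` over the admissible
`S₁` factorises over the x-tuples `a` missed by `S₀`: each contributes its absence probability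
`1 - ∑ p` plus the probabilities of its alternatives below the top `i + 1`, which is `1 - ρ(a)`.
-/

open Finset
open scoped Classical

namespace Finset

variable {ι κ R : Type*} [DecidableEq ι] [DecidableEq κ] [CommSemiring R]

theorem injOn_insert_and_image_subset_iff {g : ι → κ} {t₀ : ι} {S : Finset ι} (ht₀ : t₀ ∉ S)
    (A : Finset κ) :
    (Set.InjOn g ↑(insert t₀ S) ∧ (insert t₀ S).image g ⊆ A) ↔
      g t₀ ∈ A ∧ Set.InjOn g ↑S ∧ S.image g ⊆ A.erase (g t₀) := by
  rw [coe_insert, Set.injOn_insert (mod_cast ht₀), image_insert, insert_subset_iff, subset_erase,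
    ← coe_image, mem_coe]
  tauto

theorem prod_add_sum_fiber_eq_sum_injOn (g : ι → κ) (p : ι → R) (c : κ → R) (U : Finset ι)
    (A : Finset κ) :
    ∏ a ∈ A, (c a + ∑ t ∈ U with g t = a, p t) =
      ∑ S ∈ U.powerset.filter (fun S : Finset ι => Set.InjOn g ↑S ∧ S.image g ⊆ A),
        (∏ t ∈ S, p t) * ∏ a ∈ A \ S.image g, c a := by
  induction U using Finset.induction_on generalizing A with
  | empty => simp [filter_singleton]
  | @insert t₀ U ht₀ ih =>
    have hfiber : ∀ a, g t₀ ≠ a →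
        ∑ t ∈ insert t₀ U with g t = a, p t = ∑ t ∈ U with g t = a, p t := fun a ha => by
      rw [filter_insert, if_neg ha]
    -- A selection containing `t₀` is `t₀` plus a selection from `U` avoiding the x-tuple `g t₀`.
    rw [sum_filter, sum_powerset_insert ht₀, ← sum_filter, ← ih]
    by_cases hA : g t₀ ∈ A
    · have hnew : ∀ S ∈ U.powerset,
          (if Set.InjOn g ↑(insert t₀ S) ∧ (insert t₀ S).image g ⊆ A then
            (∏ t ∈ insert t₀ S, p t) * ∏ a ∈ A \ (insert t₀ S).image g, c a else 0) =
          p t₀ * if Set.InjOn g ↑S ∧ S.image g ⊆ A.erase (g t₀) then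
            (∏ t ∈ S, p t) * ∏ a ∈ A.erase (g t₀) \ S.image g, c a else 0 := by
        intro S hS
        have ht₀S : t₀ ∉ S := fun h => ht₀ (mem_powerset.1 hS h)
        simp only [injOn_insert_and_image_subset_iff ht₀S, hA, true_and]
        simp only [prod_insert ht₀S, image_insert, sdiff_insert, erase_sdiff_comm, mul_ite,
          mul_zero, mul_assoc]
      rw [sum_congr rfl hnew, ← mul_sum, ← sum_filter, ← ih, ← mul_prod_erase A _ hA,
        ← mul_prod_erase A _ hA,
        prod_congr rfl fun a ha => by rw [hfiber a (ne_of_mem_erase ha).symm]]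
      rw [filter_insert, if_pos rfl, sum_insert fun h => ht₀ (mem_filter.1 h).1]
      ring
    · have hnew : ∀ S ∈ U.powerset,
          (if Set.InjOn g ↑(insert t₀ S) ∧ (insert t₀ S).image g ⊆ A then
            (∏ t ∈ insert t₀ S, p t) * ∏ a ∈ A \ (insert t₀ S).image g, c a else 0) = 0 := by
        intro S hS
        exact if_neg fun h =>
          hA ((injOn_insert_and_image_subset_iff (fun h => ht₀ (mem_powerset.1 hS h)) A).1 h).1
      rw [sum_eq_zero hnew, add_zero]
      exact prod_congr rfl fun a ha => by rw [hfiber a (ne_of_mem_of_not_mem ha hA).symm]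

end Finset

section XRelation

variable {n m : ℕ} (g : Fin n → Fin m) (p : Fin n → ℝ)

/-- With `t : ℕ` ascribed, the `S` on the left is coerced to a `Finset ℕ` through the monad
structure of `Finset`. -/
theorem card_filter_coe_lt (S : Finset (Fin n)) (i : ℕ) :
    (S.filter (fun t => (t : ℕ) < i)).card = (S.filter (fun t : Fin n => (t : ℕ) < i)).card := by
  have hbind : (S >>= fun t => pure (t : ℕ) : Finset ℕ) = S.image (↑) := by
    ext; simp [Bind.bind, Pure.pure]
  rw [hbind, filter_image, card_image_of_injective _ Fin.val_injective]

theorem worldProb_eq_prod_sdiff_image (S : Finset (Fin n)) :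
    worldProb g p S = (∏ t ∈ S, p t) *
      ∏ a ∈ univ \ S.image g, (1 - ∑ t ∈ univ.filter (fun t : Fin n => g t = a), p t) := by
  rw [worldProb]
  congr 2
  ext a
  simp

theorem worldProbI_eq_prod_sdiff_image (k : ℕ) (S : Finset (Fin n)) :
    worldProbI g p k S = (∏ t ∈ S, p t) * ∏ a ∈ univ \ S.image g, (1 - rho g p k a) := by
  rw [worldProbI]
  congr 2
  ext a
  simp

theorem one_sub_rho (k : ℕ) (a : Fin m) :
    1 - rho g p k a = (1 - ∑ t ∈ univ.filter (fun t : Fin n => g t = a), p t) +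
      ∑ t ∈ univ.filter (fun t : Fin n => ¬ (t : ℕ) < k) with g t = a, p t := by
  rw [rho, ← sum_filter_add_sum_filter_not (univ.filter fun t : Fin n => g t = a)
    (fun t : Fin n => (t : ℕ) < k), filter_filter, filter_filter, filter_filter]
  simp only [and_comm]
  ring

theorem sum_worldProb_filter_eq_worldProbI (k : ℕ) (S₀ : Finset (Fin n))
    (htop : ∀ t ∈ S₀, (t : ℕ) < k) (hinj : Set.InjOn g ↑S₀) :
    ∑ S ∈ univ.filter (fun S : Finset (Fin n) =>
        Set.InjOn g ↑S ∧ S.filter (fun t : Fin n => (t : ℕ) < k) = S₀), worldProb g p S =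
      worldProbI g p k S₀ := by
  set U := univ.filter (fun t : Fin n => ¬ (t : ℕ) < k)
  set A := univ \ S₀.image g
  have hdisj : ∀ S₁ ∈ U.powerset, Disjoint S₀ S₁ := fun S₁ hS₁ =>
    disjoint_left.2 fun t ht ht₁ => (mem_filter.1 (mem_powerset.1 hS₁ ht₁)).2 (htop t ht)
  symm
  calc worldProbI g p k S₀
      = (∏ t ∈ S₀, p t) * ∏ a ∈ A, ((1 - ∑ t ∈ univ.filter (fun t : Fin n => g t = a), p t) +
          ∑ t ∈ U with g t = a, p t) := by
        rw [worldProbI_eq_prod_sdiff_image]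
        simp only [one_sub_rho g p k, U, A]
    _ = ∑ S₁ ∈ U.powerset.filter (fun S₁ : Finset (Fin n) => Set.InjOn g ↑S₁ ∧ S₁.image g ⊆ A),
          worldProb g p (S₀ ∪ S₁) := by
        rw [prod_add_sum_fiber_eq_sum_injOn, mul_sum]
        refine sum_congr rfl fun S₁ hS₁ => ?_
        rw [worldProb_eq_prod_sdiff_image, prod_union (hdisj S₁ (mem_filter.1 hS₁).1), image_union,
          sdiff_union_distrib, ← Finset.sdiff_sdiff_left', mul_assoc]
    _ = ∑ S ∈ univ.filter (fun S : Finset (Fin n) =>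
          Set.InjOn g ↑S ∧ S.filter (fun t : Fin n => (t : ℕ) < k) = S₀), worldProb g p S := by
        refine sum_nbij' (S₀ ∪ ·) (·.filter fun t : Fin n => ¬ (t : ℕ) < k) ?_ ?_ ?_ ?_
          fun _ _ => rfl
        · intro S₁ hS₁
          simp only [mem_filter, mem_powerset, mem_univ, true_and] at hS₁ ⊢
          have hdisj' := hdisj S₁ (mem_powerset.2 hS₁.1)
          obtain ⟨hU, hinj₁, hA⟩ := hS₁
          refine ⟨?_, ?_⟩
          · rw [coe_union, Set.injOn_union (disjoint_coe.2 hdisj')]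
            refine ⟨hinj, hinj₁, fun x hx y hy hxy => ?_⟩
            exact (mem_sdiff.1 (hA (mem_image_of_mem g hy))).2 (hxy ▸ mem_image_of_mem g hx)
          · rw [filter_union, filter_true_of_mem htop,
              filter_false_of_mem fun t ht => (mem_filter.1 (hU ht)).2, union_empty]
        · intro S hS
          simp only [mem_filter, mem_powerset, mem_univ, true_and] at hS ⊢
          obtain ⟨hinjS, rfl⟩ := hS
          refine ⟨filter_subset_filter _ (subset_univ S), hinjS.mono (filter_subset _ S), ?_⟩
          intro a ha
          obtain ⟨t, ht, rfl⟩ := mem_image.1 ha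
          refine mem_sdiff.2 ⟨mem_univ _, fun ht' => ?_⟩
          obtain ⟨t', ht', hgt'⟩ := mem_image.1 ht'
          have ht't := hinjS (mem_filter.1 ht').1 (mem_filter.1 ht).1 hgt'
          exact (mem_filter.1 ht).2 (ht't ▸ (mem_filter.1 ht').2)
        · intro S₁ hS₁
          have hU := mem_powerset.1 (mem_filter.1 hS₁).1
          rw [filter_union, filter_false_of_mem fun t ht h => h (htop t ht),
            filter_true_of_mem fun t ht => (mem_filter.1 (hU ht)).2, empty_union]
        · intro S hS
          rw [← (mem_filter.1 hS).2.2, filter_union_filter_not_eq]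

theorem rank_condition_filter_lt_add_one_iff (i : Fin n) (r : ℕ) (S : Finset (Fin n)) :
    (i ∈ S.filter (fun t : Fin n => (t : ℕ) < i + 1) ∧
      ((S.filter (fun t : Fin n => (t : ℕ) < i + 1)).filter
        (fun t : Fin n => (t : ℕ) < i)).card = r) ↔
      (i ∈ S ∧ (S.filter (fun t : Fin n => (t : ℕ) < i)).card = r) := by
  rw [filter_filter, filter_congr fun t _ => and_iff_right_of_imp fun h => Nat.lt_succ_of_lt h]
  simp

end XRelation

/-- `i : Fin n` is the 0-based index of tuple `t_{i+1}`, so the reduced relation consists of the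
tuples with index `≤ i`, i.e. the top `i + 1` tuples. -/
theorem pij_eq_pij_reduced_general (n m : ℕ) (g : Fin n → Fin m) (p : Fin n → ℝ)
    (i : Fin n) (j : ℕ) :
    ∑ S ∈ Finset.univ.filter (fun S : Finset (Fin n) =>
        Set.InjOn g ↑S ∧ i ∈ S ∧ (S.filter (fun t => (t : ℕ) < (i : ℕ))).card = j - 1),
      worldProb g p S
      = ∑ S ∈ Finset.univ.filter (fun S : Finset (Fin n) =>
          (∀ t ∈ S, (t : ℕ) ≤ (i : ℕ)) ∧ Set.InjOn g ↑S ∧ i ∈ S ∧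
            (S.filter (fun t => (t : ℕ) < (i : ℕ))).card = j - 1),
        worldProbI g p ((i : ℕ) + 1) S := by
  simp only [card_filter_coe_lt, ← Nat.lt_succ_iff]
  refine (sum_fiberwise_of_maps_to (g := fun S => S.filter fun t : Fin n => (t : ℕ) < i + 1)
    ?_ (worldProb g p)).symm.trans (sum_congr rfl fun S₀ hS₀ => ?_)
  · intro S hS
    obtain ⟨-, hinjS, hrankS⟩ := mem_filter.1 hS
    exact mem_filter.2 ⟨mem_univ _, fun t ht => (mem_filter.1 ht).2,
      hinjS.mono (filter_subset _ S), (rank_condition_filter_lt_add_one_iff i _ S).2 hrankS⟩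
  obtain ⟨htop, hinj, hrank⟩ := (mem_filter.1 hS₀).2
  rw [← sum_worldProb_filter_eq_worldProbI g p _ S₀ htop hinj, filter_filter]
  refine sum_congr (filter_congr fun S _ => ⟨fun ⟨⟨hinjS, _⟩, hS⟩ => ⟨hinjS, hS⟩, ?_⟩)
    fun _ _ => rfl
  rintro ⟨hinjS, rfl⟩
  exact ⟨⟨hinjS, (rank_condition_filter_lt_add_one_iff i _ S).1 hrank⟩, rfl⟩

/-- The rank probability `p_{i,j}` is the same whether computed over the full
x-Relation or over the reduced relation on the top tuples `{t | t ≤ i}`.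
Here `i : Fin n` is the (0-based) index of tuple `t_{i+1}`, so the reduced
relation consists of the tuples with index `≤ i`, i.e. the top `i+1` tuples. -/
theorem pij_eq_pij_reduced (n m : ℕ) (g : Fin n → Fin m) (p : Fin n → ℝ)
    (hp : ∀ t, 0 ≤ p t)
    (hsum : ∀ a : Fin m, ∑ t ∈ Finset.univ.filter (fun t : Fin n => g t = a), p t ≤ 1)
    (i : Fin n) (j : ℕ) (hj : 1 ≤ j) :
    ∑ S ∈ Finset.univ.filter (fun S : Finset (Fin n) =>
        Set.InjOn g ↑S ∧ i ∈ S ∧ (S.filter (fun t => (t : ℕ) < (i : ℕ))).card = j - 1),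
      worldProb g p S
      = ∑ S ∈ Finset.univ.filter (fun S : Finset (Fin n) =>
          (∀ t ∈ S, (t : ℕ) ≤ (i : ℕ)) ∧ Set.InjOn g ↑S ∧ i ∈ S ∧
            (S.filter (fun t => (t : ℕ) < (i : ℕ))).card = j - 1),
        worldProbI g p ((i : ℕ) + 1) S :=
  pij_eq_pij_reduced_general n m g p i j
end

section
/- In the general multi-alternative case, the rank probability of tuple t_i factors through the conditional count distribution that excludes t_i's own x-tuple: for all 1 ≤ i ≤ n and j ≥ 1, p_{i,j} = p(i) · c^{g(i)}_{i−1,j−1}, where c^{g(i)}_{i−1,j−1} is the Poisson-binomial probability of exactly j−1 successes among the x-tuples a ≠ g(i) with success probabilities ρ_{i−1}(a). -/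
open Finset
open scoped Classical

/-!
Deleting tuple `i` from a world containing it leaves a partial transversal of the fibres of `g`
over the x-tuples other than `g i`: a set of tuples with at most one alternative per x-tuple.
If tuple `t` carries weight `w t`, the weights of the partial transversals sum to a product over
the x-tuples, the factor of `a` being `(1 - Σ_{g t = a} p t) + Σ_{g t = a} w t`. Taking
`w t = p t • X` for the tuples of higher score than `i` and `w t = p t` otherwise makes this
factor `(1 - ρ a) + ρ a • X`, and the product of these is the generating polynomial of the
Poisson-binomial distribution: the coefficient of `X ^ (j - 1)` is the claim.
-/

open Polynomial

section PartialTransversals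

variable {α β : Type*} {g : α → β}

variable (g) in
noncomputable def partialTransversals (D : Finset α) (A : Finset β) : Finset (Finset α) :=
  {S ∈ D.powerset | (∀ t ∈ S, g t ∈ A) ∧ Set.InjOn g S}

theorem mem_partialTransversals {D S : Finset α} {A : Finset β} :
    S ∈ partialTransversals g D A ↔ S ⊆ D ∧ (∀ t ∈ S, g t ∈ A) ∧ Set.InjOn g S := by
  simp [partialTransversals]

theorem partialTransversals_empty (A : Finset β) : partialTransversals g ∅ A = {∅} := by
  ext S
  simp +contextual [mem_partialTransversals]

theorem filter_notMem_partialTransversals_insert [DecidableEq α] {t : α} {D : Finset α}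
    (ht : t ∉ D) (A : Finset β) :
    {S ∈ partialTransversals g (insert t D) A | t ∉ S} = partialTransversals g D A := by
  ext S
  simp only [mem_filter, mem_partialTransversals]
  constructor
  · rintro ⟨⟨hD, hA, hinj⟩, htS⟩
    exact ⟨(subset_insert_iff_of_notMem htS).1 hD, hA, hinj⟩
  · rintro ⟨hD, hA, hinj⟩
    exact ⟨⟨hD.trans (subset_insert t D), hA, hinj⟩, fun h => ht (hD h)⟩

theorem sum_partialTransversals_insert_of_mem [DecidableEq α] [DecidableEq β] {M : Type*}
    [AddCommMonoid M] {t : α} {D : Finset α} {A : Finset β} (ht : t ∉ D) (hA : g t ∈ A)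
    (F : Finset α → M) :
    ∑ S ∈ partialTransversals g (insert t D) A with t ∈ S, F S
      = ∑ S ∈ partialTransversals g D (A.erase (g t)), F (insert t S) := by
  refine sum_nbij' (·.erase t) (insert t) (fun S hS => ?_) (fun S hS => ?_)
    (fun S hS => insert_erase (mem_filter.1 hS).2) (fun S hS => erase_insert ?_)
    (fun S hS => by rw [insert_erase (mem_filter.1 hS).2])
  · obtain ⟨hS, htS⟩ := mem_filter.1 hS
    obtain ⟨hD, hA, hinj⟩ := mem_partialTransversals.1 hS
    refine mem_partialTransversals.2 ⟨?_, fun u hu => ?_, hinj.mono (by simp)⟩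
    · exact (erase_subset_erase t hD).trans (erase_insert_subset t D)
    · obtain ⟨hut, huS⟩ := mem_erase.1 hu
      exact mem_erase.2 ⟨fun h => hut (hinj huS htS h), hA u huS⟩
  · obtain ⟨hD, hA', hinj⟩ := mem_partialTransversals.1 hS
    have htS : t ∉ S := fun h => ht (hD h)
    refine mem_filter.2 ⟨mem_partialTransversals.2 ⟨insert_subset_insert t hD, ?_, ?_⟩,
      mem_insert_self t S⟩
    · simpa [hA] using fun u hu => mem_of_mem_erase (hA' u hu)
    · rw [coe_insert, Set.injOn_insert (by simpa using htS)]
      exact ⟨hinj, fun ⟨u, hu, hgu⟩ => (mem_erase.1 (hA' u hu)).1 hgu⟩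
  · exact fun h => ht ((mem_partialTransversals.1 hS).1 h)

theorem sum_partialTransversals_eq_prod [DecidableEq α] [DecidableEq β] {R : Type*}
    [CommSemiring R] (w : α → R) (v : β → R) (D : Finset α) (A : Finset β) :
    ∑ S ∈ partialTransversals g D A, (∏ t ∈ S, w t) * ∏ b ∈ A \ S.image g, v b
      = ∏ a ∈ A, (v a + ∑ t ∈ D with g t = a, w t) := by
  induction D using Finset.induction_on generalizing A with
  | empty => simp [partialTransversals_empty]
  | @insert t D ht ih =>
    have hfiber (a : β) : ∑ u ∈ insert t D with g u = a, w u
        = (if g t = a then w t else 0) + ∑ u ∈ D with g u = a, w u := by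
      rw [filter_insert]
      split_ifs <;> simp [ht]
    have hfiber_ne {a : β} (ha : g t ≠ a) :
        v a + ∑ u ∈ insert t D with g u = a, w u = v a + ∑ u ∈ D with g u = a, w u := by
      rw [hfiber, if_neg ha, zero_add]
    rw [← sum_filter_not_add_sum_filter _ (t ∈ ·), filter_notMem_partialTransversals_insert ht,
      ih]
    by_cases hA : g t ∈ A
    · have hweight (S) (hS : S ∈ partialTransversals g D (A.erase (g t))) :
          (∏ u ∈ insert t S, w u) * ∏ b ∈ A \ (insert t S).image g, v b
            = w t * ((∏ u ∈ S, w u) * ∏ b ∈ A.erase (g t) \ S.image g, v b) := by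
        rw [prod_insert fun h => ht ((mem_partialTransversals.1 hS).1 h), image_insert,
          sdiff_insert, erase_sdiff_comm, mul_assoc]
      rw [sum_partialTransversals_insert_of_mem ht hA, sum_congr rfl hweight, ← mul_sum, ih,
        ← mul_prod_erase A _ hA, ← mul_prod_erase A _ hA,
        prod_congr rfl fun a ha => hfiber_ne (ne_of_mem_erase ha).symm, hfiber, if_pos rfl]
      ring
    · have hempty : {S ∈ partialTransversals g (insert t D) A | t ∈ S} = ∅ :=
        filter_eq_empty_iff.2 fun S hS htS => hA ((mem_partialTransversals.1 hS).2.1 t htS)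
      rw [hempty, sum_empty, add_zero]
      exact prod_congr rfl fun a ha => (hfiber_ne fun h => hA (h ▸ ha)).symm

end PartialTransversals

theorem coeff_sum_C_mul_X_pow {ι R : Type*} [Semiring R] (s : Finset ι) (f : ι → R)
    (e : ι → ℕ) (k : ℕ) :
    (∑ x ∈ s, C (f x) * X ^ e x).coeff k = ∑ x ∈ s with e x = k, f x := by
  simp only [finsetSum_coeff, coeff_C_mul_X_pow, sum_filter, eq_comm]

theorem PB_eq_coeff_prod {α : Type*} [DecidableEq α] (A : Finset α) (q : α → ℝ) (k : ℕ) :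
    PB A q k = (∏ a ∈ A, (C (q a) * X + C (1 - q a))).coeff k := by
  rw [prod_add, PB, powersetCard_eq_filter, ← coeff_sum_C_mul_X_pow]
  refine congrArg (coeff · k) (sum_congr rfl fun T _ => ?_)
  simp only [map_mul, map_prod, prod_mul_distrib, prod_const]
  ring

theorem prod_C_mul_X_pow_ite {ι R : Type*} [CommSemiring R] (s : Finset ι) (f : ι → R)
    (P : ι → Prop) [DecidablePred P] :
    ∏ t ∈ s, C (f t) * X ^ (if P t then 1 else 0) = C (∏ t ∈ s, f t) * X ^ #{t ∈ s | P t} := by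
  simp only [prod_mul_distrib, map_prod, prod_pow_eq_pow_sum, card_filter]

theorem sum_C_mul_X_pow_ite {ι R : Type*} [Semiring R] (s : Finset ι) (f : ι → R)
    (P : ι → Prop) [DecidablePred P] :
    ∑ t ∈ s, C (f t) * X ^ (if P t then 1 else 0)
      = C (∑ t ∈ s with P t, f t) * X + C (∑ t ∈ s with ¬P t, f t) := by
  rw [← sum_filter_add_sum_filter_not s P, map_sum, map_sum, sum_mul]
  congr 1 <;> refine sum_congr rfl fun t ht => ?_ <;> simp [(mem_filter.1 ht).2]

theorem pij_eq_mul_sum_partialTransversals {n m : ℕ} (g : Fin n → Fin m) (p : Fin n → ℝ)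
    (i : Fin n) (j : ℕ) :
    pij g p i j = p i * ∑ S ∈ partialTransversals g (univ.erase i) (univ.erase (g i))
        with #{t ∈ S | t < i} = j - 1,
      (∏ t ∈ S, p t) * ∏ a ∈ univ.erase (g i) \ S.image g, (1 - ∑ t with g t = a, p t) := by
  have hpij : pij g p i j = ∑ S ∈ partialTransversals g (insert i (univ.erase i)) univ with i ∈ S,
      if #{t ∈ S | t < i} = j - 1 then worldProb g p S else 0 := by
    -- in `pij` the coercion `(t : ℕ)` turns the filter into one on `S.image Fin.val`
    simp only [pij, bind_def, pure_def, sup_singleton_apply, filter_image,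
      Fin.val_fin_lt, card_image_of_injective, Fin.val_injective, insert_erase (mem_univ i),
      ← sum_filter, filter_filter]
    refine sum_congr (ext fun S => ?_) fun _ _ => rfl
    simp [mem_partialTransversals]
  rw [hpij, sum_partialTransversals_insert_of_mem (notMem_erase i univ) (mem_univ (g i)),
    ← sum_filter, mul_sum]
  refine sum_congr (filter_congr fun S hS => ?_) fun S hS => ?_
  · rw [filter_insert, if_neg (lt_irrefl i)]
  · have hiS : i ∉ S := fun h =>
      (mem_erase.1 ((mem_partialTransversals.1 (mem_filter.1 hS).1).1 h)).1 rfl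
    have hmissed : univ.filter (fun a => ∀ t ∈ insert i S, g t ≠ a)
        = univ.erase (g i) \ S.image g := by
      ext a
      simp [eq_comm, or_imp, forall_and]
    rw [worldProb, hmissed, prod_insert hiS, mul_assoc]

theorem pij_eq_mul_condProb_general (n m : ℕ) (g : Fin n → Fin m) (p : Fin n → ℝ)
    (i : Fin n) (j : ℕ) :
    pij g p i j
      = p i * PB (Finset.univ.erase (g i)) (rho g p (i : ℕ)) (j - 1) := by
  have hfactor (a : Fin m) (ha : a ∈ univ.erase (g i)) :
      C (1 - ∑ t with g t = a, p t) + ∑ t ∈ univ.erase i with g t = a,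
          C (p t) * X ^ (if t < i then 1 else 0)
        = C (rho g p i a) * X + C (1 - rho g p i a) := by
    have hi : i ∉ univ.filter (g · = a) := by simpa using (ne_of_mem_erase ha).symm
    have hrho : rho g p i a = ∑ t ∈ univ.filter (g · = a) with t < i, p t := by
      simp only [rho, filter_filter, Fin.val_fin_lt, and_comm]
    rw [filter_erase, erase_eq_of_notMem hi, sum_C_mul_X_pow_ite, hrho,
      ← sum_filter_add_sum_filter_not (univ.filter (g · = a)) (· < i)]
    simp only [map_sub, map_add]
    ring
  have hweight (S : Finset (Fin n)) :
      C ((∏ t ∈ S, p t) * ∏ a ∈ univ.erase (g i) \ S.image g, (1 - ∑ t with g t = a, p t))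
          * X ^ #{t ∈ S | t < i}
        = (∏ t ∈ S, C (p t) * X ^ (if t < i then 1 else 0))
          * ∏ a ∈ univ.erase (g i) \ S.image g, C (1 - ∑ t with g t = a, p t) := by
    simp only [prod_C_mul_X_pow_ite, map_mul, map_prod]
    ring
  rw [pij_eq_mul_sum_partialTransversals, PB_eq_coeff_prod, ← coeff_sum_C_mul_X_pow,
    sum_congr rfl fun S _ => hweight S, sum_partialTransversals_eq_prod, prod_congr rfl hfactor]

/-- General multi-alternative case: the rank probability of tuple `i` at position
`j` factors as `p i` times the conditional count probability `c_{i-1,j-1}`, the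
Poisson-binomial probability of exactly `j-1` successes among the x-tuples
`a ≠ g i`, with success probabilities `ρ_{i-1} a` (projected to the tuples of
score higher than tuple `i`). -/
theorem pij_eq_mul_condProb (n m : ℕ) (g : Fin n → Fin m) (p : Fin n → ℝ)
    (hp : ∀ t, 0 ≤ p t)
    (hsum : ∀ a : Fin m, ∑ t ∈ Finset.univ.filter (fun t : Fin n => g t = a), p t ≤ 1)
    (i : Fin n) (j : ℕ) (hj : 1 ≤ j) :
    pij g p i j
      = p i * PB (Finset.univ.erase (g i)) (rho g p (i : ℕ)) (j - 1) :=
  pij_eq_mul_condProb_general n m g p i j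
end

section
/- Tightness of the upper bound: for 0 ≤ i < n and k ≥ 1, if p(i+1) = 1 (which forces ρ_i(g(i+1)) = 0), then tkp_k(i+1) = Σ_{j=0}^{k−1} r_{i,j}; hence the bound tkp_k(i+1) ≤ Σ_{j=0}^{k−1} r_{i,j} is tight for an arbitrary sequence of tuples. -/
/-!
Since `p i = 1` and the probabilities within an x-tuple sum to at most `1`, every other tuple of
the x-tuple of `i` has probability `0`; hence worlds without `i` have probability `0`, and
`pij i (j + 1)` is the probability that exactly `j` tuples ranked above `i` are present.
Possible worlds are the injective transversals of the fibres of `g`, so the generating function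
`∑_S Pr(S) X ^ |S ∩ U|` factorizes over the x-tuples as `∏_a (1 - ρ_U(a) + ρ_U(a) X)`, whose
coefficients are the Poisson-binomial probabilities.
-/

open Finset
open scoped Classical

open Polynomial

section Transversal
variable {ι κ R : Type*} [DecidableEq ι] [DecidableEq κ] [CommSemiring R]

theorem injOn_insert_and_image_subset_iff {g : ι → κ} {A : Finset κ} {S : Finset ι} {e : ι}
    (he : e ∉ S) :
    Set.InjOn g ↑(insert e S) ∧ (insert e S).image g ⊆ A ↔
      g e ∈ A ∧ Set.InjOn g ↑S ∧ S.image g ⊆ A.erase (g e) := by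
  rw [coe_insert, Set.injOn_insert (mod_cast he), image_insert, insert_subset_iff,
    subset_erase, ← coe_image, mem_coe]
  tauto

theorem sum_injOn_powerset_eq_prod_add_sum_fiber (g : ι → κ) (x : ι → R) (w : κ → R)
    (A : Finset κ) (E : Finset ι) :
    ∑ S ∈ E.powerset.filter (fun S : Finset ι => Set.InjOn g ↑S ∧ S.image g ⊆ A),
        (∏ t ∈ S, x t) * ∏ a ∈ A \ S.image g, w a =
      ∏ a ∈ A, (w a + ∑ t ∈ E with g t = a, x t) := by
  induction E using Finset.induction_on generalizing A with
  | empty => simp [filter_singleton]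
  | insert e E he ih =>
    have hnew : ∀ S ∈ E.powerset,
        (if Set.InjOn g ↑(insert e S) ∧ (insert e S).image g ⊆ A then
          (∏ t ∈ insert e S, x t) * ∏ a ∈ A \ (insert e S).image g, w a else 0) =
        if g e ∈ A then x e * if Set.InjOn g ↑S ∧ S.image g ⊆ A.erase (g e) then
          (∏ t ∈ S, x t) * ∏ a ∈ A.erase (g e) \ S.image g, w a else 0 else 0 := by
      intro S hS
      have heS : e ∉ S := fun h => he (mem_powerset.mp hS h)
      rw [if_congr (injOn_insert_and_image_subset_iff heS) rfl rfl, prod_insert heS,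
        image_insert, sdiff_insert, erase_sdiff_comm, ite_and, mul_ite, mul_zero, mul_assoc]
    have hfiber : ∀ a ≠ g e, ∑ t ∈ insert e E with g t = a, x t = ∑ t ∈ E with g t = a, x t :=
      fun a ha => by rw [filter_insert, if_neg ha.symm]
    rw [sum_filter, sum_powerset_insert he, sum_congr rfl hnew, ← sum_filter, ih]
    split_ifs with heA
    · have hrest : ∏ a ∈ A.erase (g e), (w a + ∑ t ∈ insert e E with g t = a, x t) =
          ∏ a ∈ A.erase (g e), (w a + ∑ t ∈ E with g t = a, x t) :=
        prod_congr rfl fun a ha => by rw [hfiber a (ne_of_mem_erase ha)]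
      rw [← mul_sum, ← sum_filter, ih, ← mul_prod_erase A _ heA, ← mul_prod_erase A _ heA,
        hrest, filter_insert, if_pos rfl, sum_insert (by simp [he])]
      ring
    · rw [sum_const_zero, add_zero]
      exact prod_congr rfl fun a ha => by rw [hfiber a (fun h => heA (h ▸ ha))]

end Transversal

theorem filter_forall_ne_eq_sdiff_image {ι κ : Type*} [DecidableEq κ] [Fintype κ] (g : ι → κ)
    (S : Finset ι) [DecidablePred fun a => ∀ t ∈ S, g t ≠ a] :
    univ.filter (fun a => ∀ t ∈ S, g t ≠ a) = univ \ S.image g := by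
  ext; simp

theorem coeff_prod_eq_PB {α : Type*} [DecidableEq α] (A : Finset α) (q : α → ℝ) (j : ℕ) :
    (∏ a ∈ A, (C (q a) * X + C (1 - q a))).coeff j = PB A q j := by
  have hterm : ∀ T ∈ A.powerset, (∏ a ∈ T, C (q a) * X) * ∏ a ∈ A \ T, C (1 - q a) =
      C ((∏ a ∈ T, q a) * ∏ a ∈ A \ T, (1 - q a)) * X ^ #T := by
    intro T _
    rw [prod_mul_distrib, prod_const, map_mul, map_prod, map_prod]
    ring
  rw [prod_add, sum_congr rfl hterm, finsetSum_coeff, PB, powersetCard_eq_filter, sum_filter]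
  simp only [coeff_C_mul_X_pow, eq_comm]

theorem sum_C_worldProb_mul_X_pow_eq_prod {n m : ℕ} (g : Fin n → Fin m) (p : Fin n → ℝ)
    (P : Fin n → Prop) [DecidablePred P] :
    ∑ S ∈ univ.filter (fun S : Finset (Fin n) => Set.InjOn g ↑S),
        C (worldProb g p S) * X ^ #(S.filter P) =
      ∏ a, (C (∑ t with P t ∧ g t = a, p t) * X + C (1 - ∑ t with P t ∧ g t = a, p t)) := by
  set y : Fin n → ℝ[X] := fun t => C (p t) * if P t then X else 1
  have hterm : ∀ S : Finset (Fin n), C (worldProb g p S) * X ^ #(S.filter P) =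
      (∏ t ∈ S, y t) * ∏ a ∈ univ \ S.image g, C (1 - ∑ t with g t = a, p t) := by
    intro S
    rw [worldProb, filter_forall_ne_eq_sdiff_image]
    simp only [y, prod_mul_distrib, prod_ite, prod_const_one, prod_const, map_mul, map_prod]
    ring
  have hfactor : ∀ a, C (1 - ∑ t with g t = a, p t) + ∑ t with g t = a, y t =
      C (∑ t with P t ∧ g t = a, p t) * X + C (1 - ∑ t with P t ∧ g t = a, p t) := by
    intro a
    rw [← sum_filter_add_sum_filter_not (univ.filter (g · = a)) P]
    simp only [y, mul_ite, mul_one, sum_ite, map_sub, map_add, map_sum, filter_filter]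
    simp only [← sum_mul, and_comm]
    ring
  simp_rw [hterm]
  simpa only [powerset_univ, subset_univ, and_true, hfactor] using
    sum_injOn_powerset_eq_prod_add_sum_fiber g y (fun a => C (1 - ∑ t with g t = a, p t)) univ univ

theorem sum_worldProb_card_filter_eq_PB {n m : ℕ} (g : Fin n → Fin m) (p : Fin n → ℝ)
    (P : Fin n → Prop) [DecidablePred P] (j : ℕ) :
    ∑ S ∈ univ.filter (fun S : Finset (Fin n) => Set.InjOn g ↑S ∧ #(S.filter P) = j),
        worldProb g p S =
      PB univ (fun a => ∑ t with P t ∧ g t = a, p t) j := by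
  have := congrArg (coeff · j) (sum_C_worldProb_mul_X_pow_eq_prod g p P)
  simp only [finsetSum_coeff, coeff_C_mul_X_pow, coeff_prod_eq_PB] at this
  rw [← this, ← filter_filter, sum_filter]
  exact sum_congr rfl fun S _ => by simp only [eq_comm]

-- In `pij`, `(t : ℕ) < (i : ℕ)` elaborates by coercing `S` to a `Finset ℕ` through the `Finset`
-- monad.
theorem card_filter_val_lt_bind {n : ℕ} (S : Finset (Fin n)) (i : ℕ) :
    #((do let a ← S; pure (a : ℕ) : Finset ℕ).filter (· < i)) =
      #(S.filter (fun t : Fin n => (t : ℕ) < i)) := by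
  have hbind : (do let a ← S; pure (a : ℕ) : Finset ℕ) = S.map Fin.valEmbedding := by
    ext; simp [Bind.bind]
  rw [hbind, filter_map, card_map]
  rfl

section ProbOne

variable {n m : ℕ} {g : Fin n → Fin m} {p : Fin n → ℝ} {i : Fin n}

theorem sum_fiber_eq_one (hsum : ∀ a, ∑ t with g t = a, p t ≤ 1) (hp : ∀ t, 0 ≤ p t)
    (hp1 : p i = 1) : ∑ t with g t = g i, p t = 1 :=
  le_antisymm (hsum _) (hp1 ▸ single_le_sum (fun t _ => hp t) (by simp))

theorem eq_zero_of_mem_fiber (hsum : ∀ a, ∑ t with g t = a, p t ≤ 1) (hp : ∀ t, 0 ≤ p t)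
    (hp1 : p i = 1) {t : Fin n} (hgt : g t = g i) (hti : t ≠ i) : p t = 0 := by
  have hfiber := sum_fiber_eq_one hsum hp hp1
  rw [← add_sum_erase _ _ (a := i) (by simp), hp1, add_eq_left,
    sum_eq_zero_iff_of_nonneg fun t _ => hp t] at hfiber
  exact hfiber t (by simp [hgt, hti])

theorem worldProb_eq_zero_of_notMem (hsum : ∀ a, ∑ t with g t = a, p t ≤ 1)
    (hp : ∀ t, 0 ≤ p t) (hp1 : p i = 1) {S : Finset (Fin n)} (hiS : i ∉ S) :
    worldProb g p S = 0 := by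
  rw [worldProb]
  by_cases hcover : ∃ t ∈ S, g t = g i
  · obtain ⟨t, htS, hgt⟩ := hcover
    rw [prod_eq_zero htS (eq_zero_of_mem_fiber hsum hp hp1 hgt (ne_of_mem_of_not_mem htS hiS)),
      zero_mul]
  · have hfactor : 1 - ∑ t with g t = g i, p t = 0 := by
      rw [sum_fiber_eq_one hsum hp hp1, sub_self]
    rw [prod_eq_zero (i := g i) (by simpa using hcover) hfactor, mul_zero]

theorem pij_succ_eq_sum_worldProb_of_prob_one (hsum : ∀ a, ∑ t with g t = a, p t ≤ 1)
    (hp : ∀ t, 0 ≤ p t) (hp1 : p i = 1) (j : ℕ) :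
    pij g p i (j + 1) = ∑ S ∈ univ.filter (fun S : Finset (Fin n) =>
        Set.InjOn g ↑S ∧ #(S.filter (fun t : Fin n => (t : ℕ) < i)) = j), worldProb g p S := by
  rw [pij]
  simp_rw [card_filter_val_lt_bind, add_tsub_cancel_right]
  refine sum_subset (fun S hS => ?_) fun S hS hS' => ?_
  · simp only [mem_filter, mem_univ, true_and] at hS ⊢
    exact ⟨hS.1, hS.2.2⟩
  · refine worldProb_eq_zero_of_notMem hsum hp hp1 fun hiS => hS' ?_
    simp only [mem_filter, mem_univ, true_and] at hS ⊢
    exact ⟨hS.1, hiS, hS.2⟩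

end ProbOne

theorem tkp_eq_partial_sum_of_prob_one_general (n m : ℕ) (g : Fin n → Fin m) (p : Fin n → ℝ)
    (hp : ∀ t, 0 ≤ p t)
    (hsum : ∀ a : Fin m, ∑ t ∈ Finset.univ.filter (fun t : Fin n => g t = a), p t ≤ 1)
    (i : ℕ) (hi : i < n) (k : ℕ)
    (hp1 : p ⟨i, hi⟩ = 1) :
    tkp g p k ⟨i, hi⟩ = ∑ j ∈ Finset.range k, PB Finset.univ (rho g p i) j := by
  rw [tkp, ← Ico_add_one_right_eq_Icc, sum_Ico_eq_sum_range]
  refine sum_congr rfl fun j _ => ?_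
  rw [add_comm, pij_succ_eq_sum_worldProb_of_prob_one hsum hp hp1,
    sum_worldProb_card_filter_eq_PB]
  rfl

/-- Tightness of the upper bound: if the next tuple has probability 1 then its
top-`k` probability equals the partial sum `Σ_{j<k} r_{i,j}`; hence the bound
`tkp_k(t_{i+1}) ≤ Σ_{j<k} r_{i,j}` is tight for an arbitrary sequence of tuples. -/
theorem tkp_eq_partial_sum_of_prob_one (n m : ℕ) (g : Fin n → Fin m) (p : Fin n → ℝ)
    (hp : ∀ t, 0 ≤ p t)
    (hsum : ∀ a : Fin m, ∑ t ∈ Finset.univ.filter (fun t : Fin n => g t = a), p t ≤ 1)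
    (i : ℕ) (hi : i < n) (k : ℕ) (hk : 1 ≤ k)
    (hp1 : p ⟨i, hi⟩ = 1) :
    tkp g p k ⟨i, hi⟩ = ∑ j ∈ Finset.range k, PB Finset.univ (rho g p i) j :=
  tkp_eq_partial_sum_of_prob_one_general n m g p hp hsum i hi k hp1
end

section
/- The upper bounds Σ_{j=0}^{k−1} r_{i,j} are nonincreasing as the scan proceeds: for every 0 ≤ i < n and every k ≥ 1, Σ_{j=0}^{k−1} r_{i+1,j} ≤ Σ_{j=0}^{k−1} r_{i,j}. -/
open Finset
open scoped Classical

/-!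
Moving from `i` to `i + 1` tuples only raises `ρ` of the x-tuple `a` holding tuple `i + 1`.
Splitting the Poisson-binomial distribution on the event `a`, the probability of fewer than
`k` successes equals the same probability for the other x-tuples minus `ρ(a)` times their
probability of exactly `k - 1` successes, which is nonnegative; so it can only decrease.
-/

section PoissonBinomial

variable {α : Type*} [DecidableEq α]

lemma PB_congr {A : Finset α} {q q' : α → ℝ} (h : Set.EqOn q q' A) (j : ℕ) :
    PB A q j = PB A q' j := by
  refine sum_congr rfl fun T hT => ?_
  have hTA := (mem_powersetCard.mp hT).1
  rw [prod_congr rfl fun a ha => h (hTA ha),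
    prod_congr rfl fun a ha => congrArg (1 - ·) (h (mem_sdiff.mp ha).1)]

lemma PB_nonneg {A : Finset α} {q : α → ℝ} (h0 : ∀ a ∈ A, 0 ≤ q a) (h1 : ∀ a ∈ A, q a ≤ 1)
    (j : ℕ) : 0 ≤ PB A q j :=
  sum_nonneg fun _ hT =>
    mul_nonneg (prod_nonneg fun a ha => h0 a ((mem_powersetCard.mp hT).1 ha))
      (prod_nonneg fun a ha => sub_nonneg.mpr (h1 a (mem_sdiff.mp ha).1))

lemma PB_insert_zero {a : α} {s : Finset α} (ha : a ∉ s) (q : α → ℝ) :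
    PB (insert a s) q 0 = (1 - q a) * PB s q 0 := by
  simp only [PB, powersetCard_zero, sum_singleton, prod_empty, one_mul, sdiff_empty,
    prod_insert ha]

lemma PB_insert_succ {a : α} {s : Finset α} (ha : a ∉ s) (q : α → ℝ) (j : ℕ) :
    PB (insert a s) q (j + 1) = q a * PB s q j + (1 - q a) * PB s q (j + 1) := by
  have haT : ∀ {i} {T : Finset α}, T ∈ powersetCard i s → a ∉ T :=
    fun hT haT => ha ((mem_powersetCard.mp hT).1 haT)
  have hdisj : Disjoint (powersetCard (j + 1) s) ((powersetCard j s).image (insert a)) :=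
    disjoint_left.mpr fun T hT hT' => by
      obtain ⟨U, -, rfl⟩ := mem_image.mp hT'
      exact haT hT (mem_insert_self a U)
  have hinj : Set.InjOn (insert a) (powersetCard j s : Set (Finset α)) :=
    fun T hT U hU hTU => by
      rw [← erase_insert (haT hT), ← erase_insert (haT hU)]
      exact congrArg (·.erase a) hTU
  rw [PB, powersetCard_succ_insert ha, sum_union hdisj, sum_image hinj, add_comm,
    PB, PB, mul_sum, mul_sum]
  congr 1
  · refine sum_congr rfl fun T hT => ?_
    rw [prod_insert (haT hT), insert_sdiff_insert, sdiff_insert_of_notMem ha]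
    ring
  · refine sum_congr rfl fun T hT => ?_
    rw [insert_sdiff_of_notMem _ (haT hT), prod_insert (notMem_sdiff_of_notMem_left ha)]
    ring

lemma sum_range_succ_PB_insert {a : α} {s : Finset α} (ha : a ∉ s) (q : α → ℝ) (k : ℕ) :
    ∑ j ∈ range (k + 1), PB (insert a s) q j
      = ∑ j ∈ range (k + 1), PB s q j - q a * PB s q k := by
  induction k with
  | zero => simp only [zero_add, sum_range_one, PB_insert_zero ha]; ring
  | succ k ih =>
    rw [sum_range_succ, ih, PB_insert_succ ha, sum_range_succ (fun j => PB s q j) (k + 1)]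
    ring

lemma sum_range_PB_antitone_of_le {a : α} {A : Finset α} (ha : a ∈ A) {q q' : α → ℝ}
    (heq : Set.EqOn q q' (A.erase a)) (hle : q a ≤ q' a)
    (h0 : ∀ b ∈ A.erase a, 0 ≤ q b) (h1 : ∀ b ∈ A.erase a, q b ≤ 1) (k : ℕ) :
    ∑ j ∈ range k, PB A q' j ≤ ∑ j ∈ range k, PB A q j := by
  rcases k with _ | k
  · simp
  rw [← insert_erase ha, sum_range_succ_PB_insert (notMem_erase a A),
    sum_range_succ_PB_insert (notMem_erase a A)]
  simp only [← PB_congr heq]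
  exact sub_le_sub_left (mul_le_mul_of_nonneg_right hle (PB_nonneg h0 h1 k)) _

end PoissonBinomial

section Rho

variable {n m : ℕ} (g : Fin n → Fin m) {p : Fin n → ℝ}

lemma rho_nonneg (hp : ∀ t, 0 ≤ p t) (i : ℕ) (a : Fin m) : 0 ≤ rho g p i a :=
  sum_nonneg fun t _ => hp t

lemma rho_le_one (hp : ∀ t, 0 ≤ p t)
    (hsum : ∀ a : Fin m, ∑ t ∈ Finset.univ.filter (fun t : Fin n => g t = a), p t ≤ 1)
    (i : ℕ) (a : Fin m) : rho g p i a ≤ 1 :=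
  (sum_le_sum_of_subset_of_nonneg (monotone_filter_right _ fun _ _ h => h.2)
    fun t _ _ => hp t).trans (hsum a)

lemma rho_mono (hp : ∀ t, 0 ≤ p t) (a : Fin m) : Monotone fun i => rho g p i a :=
  fun _ _ hij => sum_le_sum_of_subset_of_nonneg
    (monotone_filter_right _ fun _ _ h => ⟨h.1.trans_le hij, h.2⟩) fun t _ _ => hp t

lemma rho_succ_eqOn (p : Fin n → ℝ) {i : ℕ} (hi : i < n) :
    Set.EqOn (rho g p i) (rho g p (i + 1)) (univ.erase (g ⟨i, hi⟩)) := fun b hb => by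
  refine sum_congr (filter_congr fun t _ => and_congr_left fun htb => ?_) fun _ _ => rfl
  refine ⟨fun h => h.trans (Nat.lt_succ_self i), fun h => ?_⟩
  refine (Nat.lt_succ_iff_lt_or_eq.mp h).resolve_right fun hti => ?_
  exact ne_of_mem_erase hb (htb.symm.trans (congrArg g (Fin.ext hti)))

end Rho

theorem partial_sum_r_antitone_general (n m : ℕ) (g : Fin n → Fin m) (p : Fin n → ℝ)
    (hp : ∀ t, 0 ≤ p t)
    (hsum : ∀ a : Fin m, ∑ t ∈ Finset.univ.filter (fun t : Fin n => g t = a), p t ≤ 1)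
    (i : ℕ) (hi : i < n) (k : ℕ) :
    ∑ j ∈ Finset.range k, PB Finset.univ (rho g p (i + 1)) j
      ≤ ∑ j ∈ Finset.range k, PB Finset.univ (rho g p i) j :=
  sum_range_PB_antitone_of_le (mem_univ (g ⟨i, hi⟩)) (rho_succ_eqOn g p hi)
    (rho_mono g hp _ (Nat.le_succ i)) (fun b _ => rho_nonneg g hp i b)
    (fun b _ => rho_le_one g hp hsum i b) k

/-- The upper bounds `Σ_{j<k} r_{i,j}` are nonincreasing as the scan proceeds,
where `r_{i,j} = PB_j(ρ_i(1),…,ρ_i(m))`. -/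
theorem partial_sum_r_antitone (n m : ℕ) (g : Fin n → Fin m) (p : Fin n → ℝ)
    (hp : ∀ t, 0 ≤ p t)
    (hsum : ∀ a : Fin m, ∑ t ∈ Finset.univ.filter (fun t : Fin n => g t = a), p t ≤ 1)
    (i : ℕ) (hi : i < n) (k : ℕ) (hk : 1 ≤ k) :
    ∑ j ∈ Finset.range k, PB Finset.univ (rho g p (i + 1)) j
      ≤ ∑ j ∈ Finset.range k, PB Finset.univ (rho g p i) j :=
  partial_sum_r_antitone_general n m g p hp hsum i hi k
end

section
/- Early-stop bound for all unseen tuples: for every 1 ≤ i ≤ n, every k ≥ 1, and every tuple index s with i < s ≤ n, the top-k probability of the unseen tuple t_s satisfies tkp_k(s) ≤ Σ_{j=0}^{k−1} r_{i,j}. -/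
/-!
A possible world is the same thing as an independent choice, for each x-tuple, of one of its
alternatives or of none, and its probability is the product of the weights of these choices.
The x-tuple `a` is realised among the top `i` tuples with probability `ρ_i(a)`, independently of
the others, so the worlds with exactly `j` tuples among the top `i` have total probability
`r_{i,j}`. A world in which `t_s` (with `s > i`) ranks among the top `k` has fewer than `k` tuples
before `t_s`, hence fewer than `k` among the top `i`; world probabilities are nonnegative.
-/

open Finset
open scoped Classical

theorem sum_range_sum_filter_eq_sum_filter_lt {α M : Type*} [AddCommMonoid M] (s : Finset α)
    (c : α → ℕ) (F : α → M) (k : ℕ) :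
    ∑ j ∈ range k, ∑ x ∈ s with c x = j, F x = ∑ x ∈ s with c x < k, F x := by
  rw [← sum_fiberwise_of_maps_to (s := s.filter (c · < k)) (t := range k) (g := c)
    (fun x hx => mem_range.mpr (mem_filter.mp hx).2)]
  refine sum_congr rfl fun j hj => ?_
  rw [filter_filter]
  exact sum_congr (filter_congr fun x _ => ⟨fun h => ⟨h ▸ mem_range.mp hj, h⟩, fun h => h.2⟩)
    fun _ _ => rfl

theorem sum_piFinset_card_filter_eq_PB {ι β : Type*} [Fintype ι] [DecidableEq ι]
    (C : ι → Finset β) (w : ι → β → ℝ) (L : β → Prop) (q : ι → ℝ)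
    (hL : ∀ a, ∑ o ∈ C a with L o, w a o = q a)
    (hnL : ∀ a, ∑ o ∈ C a with ¬ L o, w a o = 1 - q a) (j : ℕ) :
    ∑ f ∈ Fintype.piFinset C with #(univ.filter (fun a => L (f a))) = j, ∏ a, w a (f a)
      = PB univ q j := by
  have hT : ∀ T : Finset ι, (∏ a ∈ T, q a) * ∏ a ∈ univ \ T, (1 - q a)
      = ∑ f ∈ Fintype.piFinset C with univ.filter (fun a => L (f a)) = T, ∏ a, w a (f a) := by
    intro T
    have hpi : Fintype.piFinset (fun a => (C a).filter (fun o => L o ↔ a ∈ T))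
        = (Fintype.piFinset C).filter (fun f => univ.filter (fun a => L (f a)) = T) := by
      ext f
      simp [Finset.ext_iff, forall_and]
    rw [← hpi, ← prod_univ_sum, ← prod_mul_prod_compl T, compl_eq_univ_sdiff]
    congr 1 <;> refine prod_congr rfl fun a ha => ?_
    · simp [ha, hL]
    · simp [(mem_sdiff.mp ha).2, hnL]
  rw [PB, sum_congr rfl fun T _ => hT T, ← sum_fiberwise_of_maps_to
    (s := (Fintype.piFinset C).filter (fun f => #(univ.filter (fun a => L (f a))) = j))
    (t := powersetCard j univ) (g := fun f => univ.filter (fun a => L (f a)))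
    (fun f hf => mem_powersetCard.mpr ⟨subset_univ _, (mem_filter.mp hf).2⟩)]
  refine sum_congr rfl fun T hT => ?_
  rw [filter_filter]
  refine sum_congr (filter_congr fun f _ => ?_) fun _ _ => rfl
  constructor
  · exact fun h => h.2
  · rintro rfl; exact ⟨(mem_powersetCard.mp hT).2, rfl⟩

section Selections

variable {n m : ℕ} (g : Fin n → Fin m)

/-- A possible world is encoded by choosing, for every x-tuple `a`, either `none` (`a` absent)
or one of its alternatives. -/
def alternatives (a : Fin m) : Finset (Option (Fin n)) :=
  insert none ((univ.filter (fun t => g t = a)).image some)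

noncomputable def alternativeWeight (p : Fin n → ℝ) (a : Fin m) : Option (Fin n) → ℝ
  | none => 1 - ∑ t ∈ univ.filter (fun t => g t = a), p t
  | some t => p t

def worldOf (f : Fin m → Option (Fin n)) : Finset (Fin n) :=
  univ.filter (fun t => f (g t) = some t)

variable {g}

theorem some_mem_alternatives {a : Fin m} {t : Fin n} : some t ∈ alternatives g a ↔ g t = a := by
  simp [alternatives]

theorem mem_worldOf {f : Fin m → Option (Fin n)} {t : Fin n} :
    t ∈ worldOf g f ↔ f (g t) = some t := by
  simp [worldOf]

theorem eq_some_iff_mem_worldOf {f : Fin m → Option (Fin n)}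
    (hf : f ∈ Fintype.piFinset (alternatives g)) {a : Fin m} {t : Fin n} :
    f a = some t ↔ t ∈ worldOf g f ∧ g t = a := by
  rw [mem_worldOf]
  constructor
  · intro h
    have hga : g t = a := some_mem_alternatives.mp (h ▸ Fintype.mem_piFinset.mp hf a)
    exact ⟨hga ▸ h, hga⟩
  · rintro ⟨h, rfl⟩
    exact h

theorem injOn_worldOf (f : Fin m → Option (Fin n)) : Set.InjOn g (worldOf g f) := by
  intro t₁ h₁ t₂ h₂ h
  rw [mem_coe, mem_worldOf] at h₁ h₂
  rw [h, h₂] at h₁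
  exact (Option.some_injective _ h₁).symm

theorem worldOf_injOn_piFinset : Set.InjOn (worldOf g) (Fintype.piFinset (alternatives g)) := by
  intro f₁ hf₁ f₂ hf₂ h
  funext a
  exact Option.ext fun t => by
    rw [eq_some_iff_mem_worldOf hf₁, eq_some_iff_mem_worldOf hf₂, h]

theorem image_worldOf_piFinset :
    (Fintype.piFinset (alternatives g)).image (worldOf g)
      = univ.filter (fun S : Finset (Fin n) => Set.InjOn g S) := by
  ext S
  simp only [mem_image, mem_filter, mem_univ, true_and]
  constructor
  · rintro ⟨f, -, rfl⟩
    exact injOn_worldOf f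
  · intro hS
    have hchoose : ∀ t ∈ S, ∀ h : ∃ t' ∈ S, g t' = g t, h.choose = t := fun t ht h =>
      hS h.choose_spec.1 ht h.choose_spec.2
    refine ⟨fun a => if h : ∃ t ∈ S, g t = a then some h.choose else none, ?_, ?_⟩
    · refine Fintype.mem_piFinset.mpr fun a => ?_
      split_ifs with h
      · exact some_mem_alternatives.mpr h.choose_spec.2
      · exact mem_insert_self _ _
    · ext t
      rw [mem_worldOf]
      constructor
      · intro ht
        split_ifs at ht with h
        rw [← Option.some_injective _ ht]
        exact h.choose_spec.1
      · intro ht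
        rw [dif_pos ⟨t, ht, rfl⟩, hchoose t ht]

theorem worldProb_worldOf (p : Fin n → ℝ) {f : Fin m → Option (Fin n)}
    (hf : f ∈ Fintype.piFinset (alternatives g)) :
    worldProb g p (worldOf g f) = ∏ a, alternativeWeight g p a (f a) := by
  set W := worldOf g f
  have hcompl : univ.filter (fun a => ∀ t ∈ W, g t ≠ a) = (W.image g)ᶜ := by
    ext a
    simp
  have hnone : ∀ a ∈ (W.image g)ᶜ, f a = none := by
    intro a ha
    refine Option.eq_none_iff_forall_ne_some.mpr fun t ht => ?_
    obtain ⟨htW, rfl⟩ := (eq_some_iff_mem_worldOf hf).mp ht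
    exact mem_compl.mp ha (mem_image_of_mem g htW)
  rw [← prod_mul_prod_compl (W.image g), prod_image (injOn_worldOf f), worldProb, hcompl]
  congr 1
  · refine prod_congr rfl fun t ht => ?_
    rw [mem_worldOf.mp ht]
    rfl
  · refine prod_congr rfl fun a ha => ?_
    rw [hnone a ha]
    rfl

end Selections

section RealisedInTop

variable {n m : ℕ} {g : Fin n → Fin m}

def RealisedInTop (i : ℕ) (o : Option (Fin n)) : Prop :=
  ∃ t, o = some t ∧ (t : ℕ) < i

theorem sum_alternatives_filter_realisedInTop (p : Fin n → ℝ) (i : ℕ) (a : Fin m) :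
    ∑ o ∈ alternatives g a with RealisedInTop i o, alternativeWeight g p a o = rho g p i a := by
  rw [alternatives, filter_insert, if_neg (by simp [RealisedInTop]), filter_image,
    sum_image (Option.some_injective _).injOn, rho, filter_filter]
  exact sum_congr (filter_congr fun t _ => by simp [RealisedInTop, and_comm]) fun _ _ => rfl

theorem sum_alternatives_filter_not_realisedInTop (p : Fin n → ℝ) (i : ℕ) (a : Fin m) :
    ∑ o ∈ alternatives g a with ¬ RealisedInTop i o, alternativeWeight g p a o
      = 1 - rho g p i a := by
  have hsplit : ∑ t ∈ univ.filter (fun t => g t = a), p t = rho g p i a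
      + ∑ t ∈ (univ.filter fun t => g t = a).filter (fun t : Fin n => ¬ (t : ℕ) < i), p t := by
    rw [← sum_filter_add_sum_filter_not _ (fun t : Fin n => (t : ℕ) < i), rho, filter_filter]
    simp only [and_comm]
  rw [alternatives, filter_insert, if_pos (by simp [RealisedInTop]), sum_insert (by simp),
    filter_image, sum_image (Option.some_injective _).injOn]
  simp only [alternativeWeight, RealisedInTop, Option.some.injEq, exists_eq_left']
  linarith

theorem card_filter_worldOf {f : Fin m → Option (Fin n)}
    (hf : f ∈ Fintype.piFinset (alternatives g)) (i : ℕ) :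
    #((worldOf g f).filter (fun t : Fin n => (t : ℕ) < i))
      = #(univ.filter fun a => RealisedInTop i (f a)) := by
  rw [← card_image_of_injOn ((injOn_worldOf f).mono (filter_subset _ _))]
  congr 1
  ext a
  simp [RealisedInTop, eq_some_iff_mem_worldOf hf, and_comm, and_left_comm]

theorem sum_worldProb_card_filter_lt_eq_PB (p : Fin n → ℝ) (i j : ℕ) :
    ∑ S ∈ univ.filter (fun S : Finset (Fin n) =>
        Set.InjOn g S ∧ #(S.filter (fun t : Fin n => (t : ℕ) < i)) = j), worldProb g p S
      = PB univ (rho g p i) j := by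
  rw [← sum_piFinset_card_filter_eq_PB (alternatives g) (alternativeWeight g p)
    (RealisedInTop i) (rho g p i) (sum_alternatives_filter_realisedInTop p i)
    (sum_alternatives_filter_not_realisedInTop p i) j, ← filter_filter, ← image_worldOf_piFinset,
    filter_image, sum_image (worldOf_injOn_piFinset.mono (filter_subset _ _))]
  exact sum_congr (filter_congr fun f hf => by rw [card_filter_worldOf hf])
    fun f hf => worldProb_worldOf p (mem_filter.mp hf).1

end RealisedInTop

section TopK

variable {n m : ℕ} {g : Fin n → Fin m} {p : Fin n → ℝ}

theorem worldProb_nonneg (hp : ∀ t, 0 ≤ p t)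
    (hsum : ∀ a : Fin m, ∑ t ∈ univ.filter (fun t : Fin n => g t = a), p t ≤ 1)
    (S : Finset (Fin n)) : 0 ≤ worldProb g p S :=
  mul_nonneg (prod_nonneg fun t _ => hp t) (prod_nonneg fun a _ => sub_nonneg.mpr (hsum a))

theorem tkp_eq_sum_worldProb (k : ℕ) (s : Fin n) :
    tkp g p k s = ∑ S ∈ univ.filter (fun S : Finset (Fin n) => Set.InjOn g S ∧ s ∈ S ∧
      #(S.filter (fun t : Fin n => (t : ℕ) < s)) < k), worldProb g p S := by
  -- in `pij`, `(t : ℕ)` coerces `S` itself to a `Finset ℕ` through the `Finset` monad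
  have hval : ∀ S : Finset (Fin n), #((S >>= fun t => pure (t : ℕ)).filter (· < (s : ℕ)))
      = #(S.filter (fun t : Fin n => (t : ℕ) < s)) := fun S => by
    rw [show (S >>= fun t => pure (t : ℕ)) = S.image Fin.val by ext; simp, filter_image,
      card_image_of_injective _ Fin.val_injective]
  have hrank := sum_range_sum_filter_eq_sum_filter_lt
    (univ.filter fun S : Finset (Fin n) => Set.InjOn g S ∧ s ∈ S)
    (fun S => #(S.filter (fun t : Fin n => (t : ℕ) < s))) (worldProb g p) k
  simp only [filter_filter, and_assoc] at hrank
  rw [tkp, ← Ico_add_one_right_eq_Icc, sum_Ico_eq_sum_range, ← hrank]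
  simp only [pij, hval, add_tsub_cancel_left, add_tsub_cancel_right]

theorem sum_range_PB_rho_eq_sum_worldProb (i k : ℕ) :
    ∑ j ∈ range k, PB univ (rho g p i) j
      = ∑ S ∈ univ.filter (fun S : Finset (Fin n) => Set.InjOn g S ∧
          #(S.filter (fun t : Fin n => (t : ℕ) < i)) < k), worldProb g p S := by
  simp only [← sum_worldProb_card_filter_lt_eq_PB, ← filter_filter]
  exact sum_range_sum_filter_eq_sum_filter_lt _ _ _ k

end TopK

theorem tkp_unseen_le_partial_sum_general (n m : ℕ) (g : Fin n → Fin m) (p : Fin n → ℝ)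
    (hp : ∀ t, 0 ≤ p t)
    (hsum : ∀ a : Fin m, ∑ t ∈ Finset.univ.filter (fun t : Fin n => g t = a), p t ≤ 1)
    (i : ℕ) (k : ℕ)
    (s : Fin n) (hs : i ≤ (s : ℕ)) :
    tkp g p k s ≤ ∑ j ∈ Finset.range k, PB Finset.univ (rho g p i) j := by
  rw [tkp_eq_sum_worldProb, sum_range_PB_rho_eq_sum_worldProb]
  refine sum_le_sum_of_subset_of_nonneg (fun S hS => ?_)
    fun S _ _ => worldProb_nonneg hp hsum S
  obtain ⟨hinj, -, hrank⟩ := (mem_filter.mp hS).2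
  have hbefore :
      S.filter (fun t : Fin n => (t : ℕ) < i) ⊆ S.filter (fun t : Fin n => (t : ℕ) < s) :=
    fun t ht => by
      rw [mem_filter] at ht ⊢
      exact ⟨ht.1, ht.2.trans_le hs⟩
  exact mem_filter.mpr ⟨mem_univ S, hinj, (card_le_card hbefore).trans_lt hrank⟩

/-- Early-stop bound for all unseen tuples: after scanning the top `i` tuples
(`1 ≤ i ≤ n`), the top-`k` probability of any unseen tuple `s` (1-based index
`(s:ℕ)+1 > i`) is at most `Σ_{j<k} r_{i,j}`. -/
theorem tkp_unseen_le_partial_sum (n m : ℕ) (g : Fin n → Fin m) (p : Fin n → ℝ)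
    (hp : ∀ t, 0 ≤ p t)
    (hsum : ∀ a : Fin m, ∑ t ∈ Finset.univ.filter (fun t : Fin n => g t = a), p t ≤ 1)
    (i : ℕ) (hi1 : 1 ≤ i) (hi : i ≤ n) (k : ℕ) (hk : 1 ≤ k)
    (s : Fin n) (hs : i ≤ (s : ℕ)) :
    tkp g p k s ≤ ∑ j ∈ Finset.range k, PB Finset.univ (rho g p i) j :=
  tkp_unseen_le_partial_sum_general n m g p hp hsum i k s hs
end
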